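/- Let V(G) be a group whose left multiplications act as graph automorphisms of G, with identity element o. If p < p_T(G), then E^{P_p}[ |C_o| · P^o(T_{C_o} = ∞) ] = E^{P_p}[ cap(C_o) ], where cap(A) = ∑_{x ∈ A} P^x(T_A = ∞). -/

import Mathlib

open MeasureTheory
open scoped ENNReal

namespace PaperUnion

variable {V : Type*}

/-- The subgraph of `G` consisting of the open edges of the percolation
configuration `ω`. -/
def openGraph (G : SimpleGraph V) (ω : Sym2 V → Bool) : SimpleGraph V where
  Adj x y := G.Adj x y ∧ ω s(x, y) = true
  symm := by
    constructor
    rintro x y ⟨h1, h2⟩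
    exact ⟨h1.symm, by rwa [Sym2.eq_swap]⟩
  loopless := by constructor; rintro x ⟨h, -⟩; exact G.irrefl h

/-- The open cluster of the vertex `x` in the configuration `ω`. -/
def cluster (G : SimpleGraph V) (ω : Sym2 V → Bool) (x : V) : Set V :=
  {y | (openGraph G ω).Reachable x y}

/-- `|C_x|`, the number of vertices of the open cluster of `x`. -/
noncomputable def clusterSize (G : SimpleGraph V) (ω : Sym2 V → Bool) (x : V) : ℝ≥0∞ :=
  (cluster G ω x).encard

/-- `μ` is Bernoulli(p) bond percolation on `G`: a probability measure under which the
states of distinct edges are independent and each edge is open with probability `p`. -/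
def IsBernoulli (G : SimpleGraph V) (p : ℝ≥0∞) (μ : Measure (Sym2 V → Bool)) : Prop :=
  IsProbabilityMeasure μ ∧
    ∀ F : Finset (Sym2 V), (F : Set (Sym2 V)) ⊆ G.edgeSet →
      ∀ b : Sym2 V → Bool,
        μ {ω | ∀ e ∈ F, ω e = b e} = ∏ e ∈ F, (if b e then p else 1 - p)

open Classical in
/-- The probability that the simple random walk started at `x` follows the
finite path `s`. -/
noncomputable def pathProb (G : SimpleGraph V) [G.LocallyFinite] (x : V) {n : ℕ}
    (s : Fin (n + 1) → V) : ℝ≥0∞ :=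
  (if s 0 = x then 1 else 0) *
    ∏ i : Fin n,
      if G.Adj (s i.castSucc) (s i.succ) then ((G.degree (s i.castSucc) : ℝ≥0∞))⁻¹ else 0

/-- `P^x(E)` for an event `E` depending on the first `n+1` positions of the simple
random walk. -/
noncomputable def walkProb (G : SimpleGraph V) [G.LocallyFinite] (x : V) (n : ℕ)
    (E : (Fin (n + 1) → V) → Prop) : ℝ≥0∞ :=
  ∑' s : Fin (n + 1) → V, {t : Fin (n + 1) → V | E t}.indicator (fun t => pathProb G x t) s

/-- `P^x(T_A > n)`, where `T_A = inf {m ≥ 1 : S_m ∈ A}`. -/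
noncomputable def probAvoid (G : SimpleGraph V) [G.LocallyFinite] (x : V) (A : Set V)
    (n : ℕ) : ℝ≥0∞ :=
  walkProb G x n (fun s => ∀ m : Fin (n + 1), 0 < (m : ℕ) → s m ∉ A)

/-- `P^x(T_A = ∞)`. -/
noncomputable def escapeProb (G : SimpleGraph V) [G.LocallyFinite] (x : V) (A : Set V) : ℝ≥0∞ :=
  ⨅ n : ℕ, probAvoid G x A n

/-- `P^x(k < T_A < ∞)`. -/
noncomputable def probHitAfter (G : SimpleGraph V) [G.LocallyFinite] (x : V) (A : Set V)
    (k : ℕ) : ℝ≥0∞ :=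
  probAvoid G x A k - escapeProb G x A

def IsVertexTransitive (G : SimpleGraph V) : Prop :=
  ∀ x y : V, ∃ φ : G ≃g G, φ x = y

def Transient (G : SimpleGraph V) [G.LocallyFinite] : Prop :=
  ∀ x : V, 0 < escapeProb G x {x}

def Recurrent (G : SimpleGraph V) [G.LocallyFinite] : Prop :=
  ∀ x : V, escapeProb G x {x} = 0

/-- The trace `{S_0, …, S_n}` of a finite path. -/
def trace [DecidableEq V] {n : ℕ} (s : Fin (n + 1) → V) : Finset V :=
  Finset.image s Finset.univ

/-- `R_n`, the number of vertices visited by the path. -/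
def rangeSize [DecidableEq V] {n : ℕ} (s : Fin (n + 1) → V) : ℕ :=
  (trace s).card

/-- The inner boundary `∂R_n` of the trace: the visited vertices having a
neighbour outside the trace. -/
def innerBoundary [DecidableEq V] (G : SimpleGraph V) {n : ℕ} (s : Fin (n + 1) → V) : Set V :=
  {x | x ∈ trace s ∧ ∃ y, G.Adj x y ∧ y ∉ trace s}

/-- `L_n = |∂R_n|`. -/
noncomputable def boundarySize [DecidableEq V] (G : SimpleGraph V) {n : ℕ}
    (s : Fin (n + 1) → V) : ℕ :=
  (innerBoundary G s).ncard

/-- `E^{P^x}[R_n]`. -/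
noncomputable def expRange [DecidableEq V] (G : SimpleGraph V) [G.LocallyFinite] (x : V)
    (n : ℕ) : ℝ≥0∞ :=
  ∑' s : Fin (n + 1) → V, pathProb G x s * (rangeSize s : ℝ≥0∞)

/-- `E^{P^x}[L_n]`. -/
noncomputable def expBoundary [DecidableEq V] (G : SimpleGraph V) [G.LocallyFinite] (x : V)
    (n : ℕ) : ℝ≥0∞ :=
  ∑' s : Fin (n + 1) → V, pathProb G x s * (boundarySize G s : ℝ≥0∞)

/-- `E[U_n]` where `U_n = |⋃_{i ≤ n} C_{S_i}|`, the expectation being taken with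
respect to the product of the walk measure started at `x` and the percolation
measure `μ`. -/
noncomputable def expUnion (G : SimpleGraph V) [G.LocallyFinite]
    (μ : Measure (Sym2 V → Bool)) (x : V) (n : ℕ) : ℝ≥0∞ :=
  ∑' s : Fin (n + 1) → V, pathProb G x s * ∫⁻ ω, (⋃ i, cluster G ω (s i)).encard ∂μ

/-- `c_p = E[|C_o| ⬝ P^o(T_{C_o} = ∞)]`. -/
noncomputable def cP (G : SimpleGraph V) [G.LocallyFinite] (μ : Measure (Sym2 V → Bool))
    (o : V) : ℝ≥0∞ :=
  ∫⁻ ω, clusterSize G ω o * escapeProb G o (cluster G ω o) ∂μ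


/-- `cap(A) = ∑_{x ∈ A} P^x (T_A = ∞)`. -/
noncomputable def capSum (G : SimpleGraph V) [G.LocallyFinite] (A : Set V) : ℝ≥0∞ :=
  ∑' x : A, escapeProb G (x : V) A

/-!
Mass transport. Let each vertex `z` send mass `P^z(T_{C_z} = ∞)` to every vertex of its
cluster `C_z`. The vertex `o` sends out `|C_o| P^o(T_{C_o} = ∞)` in total and receives
`cap(C_o)`, because `o ∈ C_z` iff `z ∈ C_o`, and then `C_z = C_o`. Left multiplication by `g`
is an automorphism of `G`; it preserves the walk, and the Bernoulli measure on the events that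
depend on edges of `G`, so the expected mass sent from `z` to `x` is invariant under the
diagonal action `(z, x) ↦ (g z, g x)`. Reindexing along `x ↦ x⁻¹` then shows that the expected
mass sent out by `o` equals the expected mass it receives.
-/

lemma tsum_mass_transport {Γ : Type*} [Group Γ] (f : Γ → Γ → ℝ≥0∞)
    (hf : ∀ g z x, f (g * z) (g * x) = f z x) : ∑' x, f 1 x = ∑' z, f z 1 := by
  rw [← (Equiv.inv Γ).tsum_eq]
  refine tsum_congr fun z => ?_
  simpa using hf z⁻¹ z 1

lemma lintegral_tsum_of_countable_support {ι Ω : Type*} [MeasurableSpace Ω] {μ : Measure Ω}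
    {f : ι → Ω → ℝ≥0∞} (hf : ∀ i, AEMeasurable (f i) μ) {K : Set ι} (hK : K.Countable)
    (hzero : ∀ i ∉ K, f i = 0) :
    ∫⁻ ω, ∑' i, f i ω ∂μ = ∑' i, ∫⁻ ω, f i ω ∂μ := by
  have := hK.to_subtype
  have hsupp : ∀ g : ι → ℝ≥0∞, (∀ i ∉ K, g i = 0) → ∑' i, g i = ∑' i : K, g i :=
    fun g hg => (tsum_subtype_eq_of_support_subset fun i hi => by_contra fun h => hi (hg i h)).symm
  calc ∫⁻ ω, ∑' i, f i ω ∂μ = ∫⁻ ω, ∑' i : K, f i ω ∂μ :=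
        lintegral_congr fun ω => hsupp (f · ω) fun i hi => congrFun (hzero i hi) ω
    _ = ∑' i : K, ∫⁻ ω, f i ω ∂μ := lintegral_tsum fun i => hf i
    _ = ∑' i, ∫⁻ ω, f i ω ∂μ :=
        (hsupp (fun i => ∫⁻ ω, f i ω ∂μ) fun i hi => by simp [hzero i hi]).symm

lemma openGraph_le (G : SimpleGraph V) (ω : Sym2 V → Bool) : openGraph G ω ≤ G :=
  fun _ _ h => h.1

section Paths

variable (G : SimpleGraph V)

def walkSeqs (x : V) (n : ℕ) : Set (Fin (n + 1) → V) :=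
  {s | s 0 = x ∧ ∀ i : Fin n, G.Adj (s i.castSucc) (s i.succ)}

lemma reachable_iff_exists_walkSeqs {x y : V} :
    G.Reachable x y ↔ ∃ n, ∃ s ∈ walkSeqs G x n, s (Fin.last n) = y := by
  constructor
  · rintro ⟨w⟩
    exact ⟨w.length, fun i => w.getVert i,
      ⟨by simp, fun i => by simpa using w.adj_getVert_succ i.is_lt⟩, by simp⟩
  · rintro ⟨n, s, ⟨rfl, hadj⟩, rfl⟩
    exact Fin.induction (motive := fun i => G.Reachable (s 0) (s i)) .rfl
      (fun i ih => ih.trans (hadj i).reachable) _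

lemma finite_walkSeqs [G.LocallyFinite] : ∀ (x : V) (n : ℕ), (walkSeqs G x n).Finite
  | x, 0 => (Set.finite_singleton fun _ => x).subset fun s ⟨hs, _⟩ =>
      funext fun i => by rw [Fin.fin_one_eq_zero i, hs]
  | x, n + 1 => by
    have hcons : walkSeqs G x (n + 1) ⊆
        ⋃ y ∈ G.neighborSet x, Fin.cons x '' walkSeqs G y n := by
      rintro s ⟨rfl, hadj⟩
      refine Set.mem_biUnion (x := s 1) (hadj 0)
        ⟨Fin.tail s, ⟨rfl, fun i => ?_⟩, Fin.cons_self_tail s⟩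
      simpa only [Fin.tail, Fin.succ_castSucc] using hadj i.succ
    exact ((G.neighborSet x).toFinite.biUnion fun y _ =>
      (finite_walkSeqs y n).image _).subset hcons

lemma countable_setOf_reachable [G.LocallyFinite] (x : V) :
    {y | G.Reachable x y}.Countable := by
  refine (Set.countable_iUnion fun n =>
    ((finite_walkSeqs G x n).image fun s => s (Fin.last n)).countable).mono fun y hy => ?_
  obtain ⟨n, s, hs, rfl⟩ := (reachable_iff_exists_walkSeqs G).1 hy
  exact Set.mem_iUnion.2 ⟨n, s, hs, rfl⟩

lemma pathProb_eq_zero_of_notMem_walkSeqs [G.LocallyFinite] {x : V} {n : ℕ}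
    {s : Fin (n + 1) → V} (hs : s ∉ walkSeqs G x n) : pathProb G x s = 0 := by
  simp only [walkSeqs, Set.mem_ofPred_eq, not_and_or, not_forall] at hs
  rcases hs with h0 | ⟨i, hi⟩
  · simp [pathProb, h0]
  · exact mul_eq_zero_of_right _ (Finset.prod_eq_zero (Finset.mem_univ i) (if_neg hi))

lemma measurable_walkProb [G.LocallyFinite] {Ω : Type*} {m : MeasurableSpace Ω}
    (x : V) (n : ℕ)
    {E : Ω → (Fin (n + 1) → V) → Prop} (hE : ∀ s, MeasurableSet {ω | E ω s}) :
    Measurable fun ω => walkProb G x n (E ω) := by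
  have : Countable (walkSeqs G x n) := (finite_walkSeqs G x n).countable.to_subtype
  have hsum : ∀ ω, walkProb G x n (E ω) =
      ∑' s : walkSeqs G x n,
        {ω | E ω s}.indicator (fun _ => pathProb G x (s : Fin (n + 1) → V)) ω := by
    intro ω
    rw [walkProb, ← tsum_subtype_eq_of_support_subset (s := walkSeqs G x n)]
    · rfl
    · intro s hs
      by_contra h
      exact hs (by simp [pathProb_eq_zero_of_notMem_walkSeqs G h])
  simp only [hsum]
  exact Measurable.tsum fun s => measurable_const.indicator (hE s)

end Paths

section Automorphism

variable {G : SimpleGraph V} (φ : G ≃g G)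

lemma pathProb_iso_comp [G.LocallyFinite] (x : V) {n : ℕ} (s : Fin (n + 1) → V) :
    pathProb G (φ x) (φ ∘ s) = pathProb G x s := by
  classical
  simp only [pathProb, Function.comp_apply, SimpleGraph.Iso.degree_eq]
  congr 1
  · exact if_congr (EmbeddingLike.apply_eq_iff_eq φ) rfl rfl
  · exact Finset.prod_congr rfl fun i _ => if_congr φ.map_adj_iff rfl rfl

lemma probAvoid_iso_apply [G.LocallyFinite] (x : V) (A : Set V) (n : ℕ) :
    probAvoid G (φ x) A n = probAvoid G x (φ ⁻¹' A) n := by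
  rw [probAvoid, walkProb, ← (Equiv.piCongrRight fun _ => φ.toEquiv).tsum_eq]
  refine tsum_congr fun s => ?_
  classical
  simp only [Set.indicator_apply, Set.mem_ofPred_eq, Set.mem_preimage]
  exact if_congr Iff.rfl (pathProb_iso_comp φ x s) rfl

lemma escapeProb_iso_apply [G.LocallyFinite] (x : V) (A : Set V) :
    escapeProb G (φ x) A = escapeProb G x (φ ⁻¹' A) :=
  iInf_congr fun n => probAvoid_iso_apply φ x A n

lemma cluster_comp_iso (ω : Sym2 V → Bool) (x : V) :
    cluster G (ω ∘ Sym2.map φ) x = φ ⁻¹' cluster G ω (φ x) := by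
  let ψ : openGraph G (ω ∘ Sym2.map φ) ≃g openGraph G ω :=
    ⟨φ.toEquiv, and_congr φ.map_adj_iff Iff.rfl⟩
  ext y
  exact ψ.reachable_iff.symm

end Automorphism

section EdgeSigma

variable (G : SimpleGraph V)

def edgeCylinders : Set (Set (Sym2 V → Bool)) :=
  {S | ∃ (F : Finset (Sym2 V)) (b : Sym2 V → Bool), (F : Set (Sym2 V)) ⊆ G.edgeSet ∧
    S = {ω | ∀ e ∈ F, ω e = b e}}

/-- `IsBernoulli` pins `μ` down only on events that depend on the edges of `G`, so its
invariance under automorphisms of `G` holds on this σ-algebra only. -/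
abbrev edgeSigma : MeasurableSpace (Sym2 V → Bool) :=
  .generateFrom (edgeCylinders G)

lemma edgeSigma_le : edgeSigma G ≤ MeasurableSpace.pi := by
  refine MeasurableSpace.generateFrom_le ?_
  rintro _ ⟨F, b, -, rfl⟩
  simp only [Set.ofPred_forall]
  exact .biInter F.countable_toSet fun e _ =>
    measurableSet_eq_fun (measurable_pi_apply e) measurable_const

lemma isPiSystem_edgeCylinders : IsPiSystem (edgeCylinders G) := by
  classical
  rintro _ ⟨F₁, b₁, hF₁, rfl⟩ _ ⟨F₂, b₂, hF₂, rfl⟩ ⟨ω₀, hω₁, hω₂⟩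
  refine ⟨F₁ ∪ F₂, ω₀, by simpa [Set.union_subset_iff] using ⟨hF₁, hF₂⟩, ?_⟩
  have agree : ∀ (F : Finset (Sym2 V)) (b ω : Sym2 V → Bool), (∀ e ∈ F, ω₀ e = b e) →
      ((∀ e ∈ F, ω e = b e) ↔ ∀ e ∈ F, ω e = ω₀ e) :=
    fun F b ω h => forall₂_congr fun e he => by rw [h e he]
  ext ω
  simp only [Set.mem_inter_iff, Set.mem_ofPred_eq, Finset.mem_union, or_imp, forall_and]
  rw [agree F₁ b₁ ω hω₁, agree F₂ b₂ ω hω₂]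

variable {G} {p : ℝ≥0∞} {μ : Measure (Sym2 V → Bool)}

lemma IsBernoulli.measure_preimage_comp_iso (hμ : IsBernoulli G p μ) (φ : G ≃g G)
    {S : Set (Sym2 V → Bool)} (hS : S ∈ edgeCylinders G) :
    μ ((· ∘ Sym2.map φ) ⁻¹' S) = μ S := by
  obtain ⟨F, b, hF, rfl⟩ := hS
  have hpre : (· ∘ Sym2.map φ) ⁻¹' {ω | ∀ e ∈ F, ω e = b e} =
      {ω | ∀ e ∈ F.map φ.toEmbedding.sym2Map, ω e = b (Sym2.map φ.symm e)} := by
    ext ω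
    simp [Sym2.map_map, Function.comp_def]
  have hFφ : (F.map φ.toEmbedding.sym2Map : Set (Sym2 V)) ⊆ G.edgeSet := by
    rw [Finset.coe_map, Set.image_subset_iff]
    exact fun e he => φ.toHom.map_mem_edgeSet (hF he)
  rw [hpre, hμ.2 _ hFφ, hμ.2 F hF, Finset.prod_map]
  simp [Sym2.map_map]

lemma IsBernoulli.lintegral_comp_iso (hμ : IsBernoulli G p μ) (φ : G ≃g G)
    {f : (Sym2 V → Bool) → ℝ≥0∞} (hf : Measurable[edgeSigma G] f) :
    ∫⁻ ω, f (ω ∘ Sym2.map φ) ∂μ = ∫⁻ ω, f ω ∂μ := by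
  have hle := edgeSigma_le G
  have hφ : Measurable (· ∘ Sym2.map φ : (Sym2 V → Bool) → Sym2 V → Bool) :=
    measurable_pi_lambda _ fun e => measurable_pi_apply _
  have := hμ.1
  have htrim : (μ.map (· ∘ Sym2.map φ)).trim hle = μ.trim hle := by
    refine ext_of_generate_finite (m0 := edgeSigma G) (edgeCylinders G) rfl
      (isPiSystem_edgeCylinders G) (fun S hS => ?_) ?_
    · have hS' := MeasurableSpace.measurableSet_generateFrom hS
      rw [trim_measurableSet_eq hle hS', trim_measurableSet_eq hle hS',
        Measure.map_apply hφ (hle _ hS'), hμ.measure_preimage_comp_iso φ hS]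
    · rw [trim_measurableSet_eq hle .univ, trim_measurableSet_eq hle .univ,
        Measure.map_apply hφ .univ, Set.preimage_univ]
  rw [← lintegral_map (hf.mono hle le_rfl) hφ, ← lintegral_trim hle hf, htrim,
    lintegral_trim hle hf]

end EdgeSigma

section ClusterEvents

variable (G : SimpleGraph V) [G.LocallyFinite]

lemma measurableSet_mem_cluster (x y : V) :
    MeasurableSet[edgeSigma G] {ω | y ∈ cluster G ω x} := by
  have hpaths : {ω | y ∈ cluster G ω x} =
      ⋃ n, ⋃ s ∈ {s ∈ walkSeqs G x n | s (Fin.last n) = y},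
        {ω | ∀ i : Fin n, ω s(s i.castSucc, s i.succ) = true} := by
    ext ω
    simp only [cluster, Set.mem_ofPred_eq, reachable_iff_exists_walkSeqs, walkSeqs, openGraph,
      Set.mem_iUnion, exists_prop, forall_and]
    tauto
  rw [hpaths]
  refine .iUnion fun n => Set.Finite.measurableSet_biUnion
    ((finite_walkSeqs G x n).subset (Set.sep_subset _ _)) fun s hs => ?_
  classical
  refine MeasurableSpace.measurableSet_generateFrom
    ⟨Finset.univ.image fun i : Fin n => s(s i.castSucc, s i.succ), fun _ => true, ?_, ?_⟩
  · simpa [Set.range_subset_iff] using hs.1.2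
  · simp

lemma measurable_escapeProb_cluster (z x : V) :
    Measurable[edgeSigma G] fun ω => escapeProb G z (cluster G ω x) := by
  refine .iInf fun n => measurable_walkProb G z n fun s => ?_
  simp only [Set.ofPred_forall, ← Set.compl_ofPred]
  exact .iInter fun m => .iInter fun _ => (measurableSet_mem_cluster G x (s m)).compl

end ClusterEvents

section EscapeMass

variable (G : SimpleGraph V) [G.LocallyFinite]

noncomputable def escapeMass (ω : Sym2 V → Bool) (z x : V) : ℝ≥0∞ :=
  (cluster G ω z).indicator (fun _ => escapeProb G z (cluster G ω z)) x

lemma tsum_escapeMass_right (ω : Sym2 V → Bool) (z : V) :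
    ∑' x, escapeMass G ω z x = clusterSize G ω z * escapeProb G z (cluster G ω z) := by
  simp only [escapeMass]
  rw [← tsum_subtype, ENNReal.tsum_set_const, clusterSize]

lemma tsum_escapeMass_left (ω : Sym2 V → Bool) (x : V) :
    ∑' z, escapeMass G ω z x = capSum G (cluster G ω x) := by
  rw [capSum, tsum_subtype (cluster G ω x) fun z => escapeProb G z (cluster G ω x)]
  refine tsum_congr fun z => ?_
  by_cases hz : z ∈ cluster G ω x
  · have hx : x ∈ cluster G ω z := SimpleGraph.Reachable.symm hz
    have hC : cluster G ω z = cluster G ω x := by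
      ext y
      exact ⟨hz.trans, hx.trans⟩
    rw [escapeMass, Set.indicator_of_mem hx, Set.indicator_of_mem hz, hC]
  · have hx : x ∉ cluster G ω z := fun hx => hz (SimpleGraph.Reachable.symm hx)
    rw [escapeMass, Set.indicator_of_notMem hx, Set.indicator_of_notMem hz]

lemma escapeMass_eq_zero_of_not_reachable {z x : V} (h : ¬ G.Reachable z x)
    (ω : Sym2 V → Bool) : escapeMass G ω z x = 0 :=
  Set.indicator_of_notMem (fun hx : x ∈ cluster G ω z => h (hx.mono (openGraph_le G ω))) _

lemma escapeMass_comp_iso (φ : G ≃g G) (ω : Sym2 V → Bool) (z x : V) :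
    escapeMass G (ω ∘ Sym2.map φ) z x = escapeMass G ω (φ z) (φ x) := by
  rw [escapeMass, cluster_comp_iso, ← escapeProb_iso_apply, escapeMass]
  exact Set.indicator_comp_right (g := fun _ => _) φ

lemma measurable_escapeMass (z x : V) :
    Measurable[edgeSigma G] fun ω => escapeMass G ω z x := by
  have : (fun ω => escapeMass G ω z x) =
      {ω | x ∈ cluster G ω z}.indicator fun ω => escapeProb G z (cluster G ω z) := by
    ext ω
    classical
    simp [escapeMass, Set.indicator_apply]
  rw [this]
  exact (measurable_escapeProb_cluster G z z).indicator (measurableSet_mem_cluster G z x)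

lemma IsBernoulli.lintegral_escapeMass_iso {p : ℝ≥0∞} {μ : Measure (Sym2 V → Bool)}
    (hμ : IsBernoulli G p μ) (φ : G ≃g G) (z x : V) :
    ∫⁻ ω, escapeMass G ω (φ z) (φ x) ∂μ = ∫⁻ ω, escapeMass G ω z x ∂μ := by
  simp only [← escapeMass_comp_iso]
  exact hμ.lintegral_comp_iso φ (measurable_escapeMass G z x)

end EscapeMass

def mulLeftIso [Group V] {G : SimpleGraph V}
    (hinv : ∀ g x y : V, G.Adj x y ↔ G.Adj (g * x) (g * y)) (g : V) : G ≃g G :=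
  ⟨Equiv.mulLeft g, (hinv g _ _).symm⟩

theorem statement_4_general {V : Type*} [Group V] (G : SimpleGraph V) [G.LocallyFinite]
    (hinv : ∀ g x y : V, G.Adj x y ↔ G.Adj (g * x) (g * y))
    (p : ℝ≥0∞)
    (μ : Measure (Sym2 V → Bool)) (hμ : IsBernoulli G p μ) :
    cP G μ 1 = ∫⁻ ω, capSum G (cluster G ω (1 : V)) ∂μ := by
  have hK := countable_setOf_reachable G 1
  have hmeas : ∀ z x, AEMeasurable (fun ω => escapeMass G ω z x) μ := fun z x =>
    ((measurable_escapeMass G z x).mono (edgeSigma_le G) le_rfl).aemeasurable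
  calc cP G μ 1 = ∫⁻ ω, ∑' x, escapeMass G ω 1 x ∂μ := by
        simp only [cP, tsum_escapeMass_right]
    _ = ∑' x, ∫⁻ ω, escapeMass G ω 1 x ∂μ :=
      lintegral_tsum_of_countable_support (hmeas 1) hK fun x hx =>
        funext (escapeMass_eq_zero_of_not_reachable G hx)
    _ = ∑' z, ∫⁻ ω, escapeMass G ω z 1 ∂μ :=
      tsum_mass_transport (fun z x => ∫⁻ ω, escapeMass G ω z x ∂μ) fun g =>
        hμ.lintegral_escapeMass_iso G (mulLeftIso hinv g)
    _ = ∫⁻ ω, ∑' z, escapeMass G ω z 1 ∂μ :=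
      (lintegral_tsum_of_countable_support (hmeas · 1) hK fun z hz =>
        funext (escapeMass_eq_zero_of_not_reachable G fun h => hz h.symm)).symm
    _ = ∫⁻ ω, capSum G (cluster G ω 1) ∂μ := by simp only [tsum_escapeMass_left]

/-- `c_p = E[cap (C_o)]` on graphs with a transitive group structure. -/
theorem statement_4 {V : Type*} [Group V] [DecidableEq V] (G : SimpleGraph V) [G.LocallyFinite]
    (hinv : ∀ g x y : V, G.Adj x y ↔ G.Adj (g * x) (g * y))
    (hdeg : ∃ Δ : ℕ, ∀ x : V, G.degree x ≤ Δ)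
    (p : ℝ≥0∞) (hp : p < 1)
    (μ : Measure (Sym2 V → Bool)) (hμ : IsBernoulli G p μ)
    (hsub : ∫⁻ ω, clusterSize G ω (1 : V) ∂μ < ⊤) :
    cP G μ 1 = ∫⁻ ω, capSum G (cluster G ω (1 : V)) ∂μ :=
  statement_4_general G hinv p μ hμ

end PaperUnion
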